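/- Let H be an infinite-dimensional separable complex Hilbert space with orthonormal basis (e_m)_{m∈ℕ}, let V : H → H be a bounded linear operator that is an isometry, and let λ_1, …, λ_d ∈ ℂ with |λ_j| < 1 for each j and λ_j ≠ 0 for at least one j (so the finite Blaschke product ∏_{j=1}^d (z+λ_j)/(1+conj(λ_j)z) has at least one nonzero root). Define B(V*) := ∏_{j=1}^d (V* + λ_j·1)(1 + conj(λ_j)V*)⁻¹ and b_m := B(V*) e_m. Suppose that for every m ∈ ℕ there exist a positive integer s_m and f_m ∈ ker(V*) with ‖f_m‖ = 1 such that e_m = V^{s_m - 1} f_m. Then the frame (b_m)_{m∈ℕ} is fully insured: for every k ∈ ℕ there exist A, B > 0 such that A‖g‖² ≤ Σ_{m∈ℕ, m≠k} |⟨g, b_m⟩|² ≤ B‖g‖² for all g ∈ H, i.e. every vector b_k is redundant. -/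

import Mathlib

/-- The Blaschke operator `B(V*) = ∏_j (V* + λ_j·1)(1 + conj(λ_j)V*)⁻¹`. -/
noncomputable def blaschkeOp {H : Type*} [NormedAddCommGroup H] [InnerProductSpace ℂ H]
    [CompleteSpace H] (V : H →L[ℂ] H) {d : ℕ} (lam : Fin d → ℂ) : H →L[ℂ] H :=
  (List.ofFn fun j =>
    (ContinuousLinearMap.adjoint V + lam j • (1 : H →L[ℂ] H)) *
      Ring.inverse ((1 : H →L[ℂ] H) + (starRingEnd ℂ) (lam j) • ContinuousLinearMap.adjoint V)).prod

section Aux19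
set_option linter.unusedSectionVars false
open ContinuousLinearMap RCLike
variable {H : Type*} [NormedAddCommGroup H] [InnerProductSpace ℂ H] [CompleteSpace H]
local notation "⟪" x ", " y "⟫" => @inner ℂ _ _ x y

private lemma aux_inner_map (V : H →L[ℂ] H) (hV : ∀ x, ‖V x‖ = ‖x‖) (x y : H) :
    ⟪V x, V y⟫ = ⟪x, y⟫ :=
  (⟨(V : H →ₗ[ℂ] H), hV⟩ : H →ₗᵢ[ℂ] H).inner_map_map x y

private lemma aux_WV (V : H →L[ℂ] H) (hV : ∀ x, ‖V x‖ = ‖x‖) (x : H) :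
    ContinuousLinearMap.adjoint V (V x) = x := by
  apply ext_inner_right ℂ
  intro v
  rw [adjoint_inner_left]
  exact aux_inner_map V hV x v

private lemma aux_norm_le (V : H →L[ℂ] H) (hV : ∀ x, ‖V x‖ = ‖x‖) : ‖V‖ ≤ 1 :=
  opNorm_le_bound V zero_le_one (fun x => by rw [hV]; simp)

private lemma aux_adj_norm_le (V : H →L[ℂ] H) (hV : ∀ x, ‖V x‖ = ‖x‖) :
    ‖ContinuousLinearMap.adjoint V‖ ≤ 1 := by
  rw [← star_eq_adjoint, norm_star]; exact aux_norm_le V hV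

private lemma aux_unit (T : H →L[ℂ] H) (hT : ‖T‖ ≤ 1) (a : ℂ) (ha : ‖a‖ < 1) :
    IsUnit ((1 : H →L[ℂ] H) + a • T) := by
  have h1 : ‖-(a • T)‖ < 1 := by
    rw [norm_neg, norm_smul]
    calc ‖a‖ * ‖T‖ ≤ ‖a‖ * 1 := mul_le_mul_of_nonneg_left hT (norm_nonneg a)
      _ < 1 := by simpa using ha
  simpa using (Units.oneSub (-(a • T)) h1).isUnit

private lemma aux_re_conj (a z : ℂ) :
    Complex.re ((starRingEnd ℂ a) * z) = Complex.re (a * (starRingEnd ℂ z)) := by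
  simp [Complex.mul_re]

private lemma aux_ptnorm (V : H →L[ℂ] H) (hV : ∀ x, ‖V x‖ = ‖x‖) (a : ℂ) (y : H) :
    ‖V y + (starRingEnd ℂ a) • y‖ = ‖y + a • V y‖ := by
  rw [← sq_eq_sq₀ (norm_nonneg _) (norm_nonneg _)]
  rw [norm_add_sq (𝕜 := ℂ), norm_add_sq (𝕜 := ℂ)]
  rw [inner_smul_right, inner_smul_right, norm_smul, norm_smul, hV]
  have h1 : ⟪y, V y⟫ = starRingEnd ℂ ⟪V y, y⟫ := (inner_conj_symm _ _).symm
  rw [h1]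
  have h3 : re ((starRingEnd ℂ a) * ⟪V y, y⟫) = re (a * (starRingEnd ℂ ⟪V y, y⟫)) :=
    aux_re_conj a _
  simp only [RCLike.norm_conj] at *
  rw [← h3]

private lemma aux_key_sq (V : H →L[ℂ] H) (hV : ∀ x, ‖V x‖ = ‖x‖) (a : ℂ) (u : H) :
    ‖u + (starRingEnd ℂ a) • (ContinuousLinearMap.adjoint V u)‖ ^ 2
      - ‖ContinuousLinearMap.adjoint V u + a • u‖ ^ 2
    = (1 - ‖a‖ ^ 2) * ‖u - V (ContinuousLinearMap.adjoint V u)‖ ^ 2 := by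
  set w := ContinuousLinearMap.adjoint V u with hw
  have hVw : ‖V w‖ = ‖w‖ := hV w
  have h2 : ⟪u, V w⟫ = (‖w‖ : ℂ) ^ 2 := by
    rw [← adjoint_inner_left, ← hw, inner_self_eq_norm_sq_to_K]; norm_cast
  rw [norm_add_sq (𝕜 := ℂ), norm_add_sq (𝕜 := ℂ), norm_sub_sq (𝕜 := ℂ)]
  rw [inner_smul_right, inner_smul_right, h2, norm_smul, norm_smul]
  have h1 : ⟪w, u⟫ = starRingEnd ℂ ⟪u, w⟫ := (inner_conj_symm _ _).symm
  rw [h1]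
  have h3 : re ((starRingEnd ℂ a) * ⟪u, w⟫) = re (a * (starRingEnd ℂ ⟪u, w⟫)) :=
    aux_re_conj a _
  simp only [RCLike.norm_conj] at *
  rw [← h3, hVw]
  have h4 : re ((‖w‖ : ℂ) ^ 2) = ‖w‖ ^ 2 := by norm_cast
  rw [h4]
  ring

private lemma aux_comm_inv (x y : H →L[ℂ] H) (h : Commute x y) (hy : IsUnit y) :
    Commute x (Ring.inverse y) := by
  obtain ⟨u, rfl⟩ := hy
  rw [Ring.inverse_unit]
  exact h.units_inv_right

private lemma aux_comm_poly (T : H →L[ℂ] H) (a b : ℂ) :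
    Commute (T + a • 1) ((1 : H →L[ℂ] H) + b • T) := by
  have h1 : Commute T (1 + b • T) :=
    (Commute.one_right T).add_right ((Commute.refl T).smul_right b)
  have h2 : Commute (a • (1 : H →L[ℂ] H)) (1 + b • T) :=
    (Commute.one_left (1 + b • T)).smul_left a
  exact h1.add_left h2

private lemma aux_comm_poly2 (T : H →L[ℂ] H) (a b : ℂ) :
    Commute ((1 : H →L[ℂ] H) + a • T) ((1 : H →L[ℂ] H) + b • T) := by
  have h1 : Commute T ((1 : H →L[ℂ] H) + b • T) :=
    (Commute.one_right T).add_right ((Commute.refl T).smul_right b)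
  exact ((Commute.one_left _).add_left (h1.smul_left a))

/-- The single Blaschke factor. -/
noncomputable def auxF (V : H →L[ℂ] H) (a : ℂ) : H →L[ℂ] H :=
  (ContinuousLinearMap.adjoint V + a • (1 : H →L[ℂ] H)) *
    Ring.inverse ((1 : H →L[ℂ] H) + (starRingEnd ℂ a) • ContinuousLinearMap.adjoint V)

private lemma aux_star_factor (V : H →L[ℂ] H) (a : ℂ) :
    star (auxF V a)
      = Ring.inverse ((1 : H →L[ℂ] H) + a • V) * (V + (starRingEnd ℂ a) • 1) := by
  rw [auxF, star_mul, ← Ring.inverse_star, star_add, star_smul, star_one, star_add, star_smul,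
    star_eq_adjoint, adjoint_adjoint]
  simp

private lemma aux_starF_iso (V : H →L[ℂ] H) (hV : ∀ x, ‖V x‖ = ‖x‖) (a : ℂ) (ha : ‖a‖ < 1)
    (x : H) : ‖star (auxF V a) x‖ = ‖x‖ := by
  have hu : IsUnit ((1 : H →L[ℂ] H) + a • V) := aux_unit V (aux_norm_le V hV) a ha
  have hc : Commute (V + (starRingEnd ℂ a) • 1) (Ring.inverse ((1 : H →L[ℂ] H) + a • V)) :=
    aux_comm_inv _ _ (aux_comm_poly V _ a) hu
  rw [aux_star_factor, ← hc.eq, mul_apply_eq_comp]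
  set y := Ring.inverse ((1 : H →L[ℂ] H) + a • V) x with hy
  have hxy : x = y + a • V y := by
    have : ((1 : H →L[ℂ] H) + a • V) (Ring.inverse ((1 : H →L[ℂ] H) + a • V) x) = x := by
      rw [← mul_apply_eq_comp, Ring.mul_inverse_cancel _ hu, one_apply_eq_self]
    rw [← hy] at this
    rw [← this]
    simp [add_apply, smul_apply]
  rw [add_apply, smul_apply, one_apply_eq_self, aux_ptnorm V hV a y, ← hxy]

private lemma aux_F_norm_le (V : H →L[ℂ] H) (hV : ∀ x, ‖V x‖ = ‖x‖) (a : ℂ) (ha : ‖a‖ < 1) :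
    ‖auxF V a‖ ≤ 1 := by
  rw [← norm_star]
  exact opNorm_le_bound _ zero_le_one
    (fun x => by rw [aux_starF_iso V hV a ha x, one_mul])

private lemma aux_F_contract (V : H →L[ℂ] H) (hV : ∀ x, ‖V x‖ = ‖x‖) (a : ℂ) (ha : ‖a‖ < 1)
    (x : H) : ‖auxF V a x‖ ≤ ‖x‖ := by
  calc ‖auxF V a x‖ ≤ ‖auxF V a‖ * ‖x‖ := le_opNorm _ _
    _ ≤ 1 * ‖x‖ := mul_le_mul_of_nonneg_right (aux_F_norm_le V hV a ha) (norm_nonneg x)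
    _ = ‖x‖ := one_mul _

private lemma aux_prod_contract (l : List (H →L[ℂ] H)) (h : ∀ T ∈ l, ∀ x, ‖T x‖ ≤ ‖x‖) :
    ∀ x, ‖l.prod x‖ ≤ ‖x‖ := by
  induction l with
  | nil => intro x; simp [one_apply]
  | cons T l ih =>
    intro x
    rw [List.prod_cons, mul_apply_eq_comp]
    calc ‖T (l.prod x)‖ ≤ ‖l.prod x‖ := h T List.mem_cons_self _
      _ ≤ ‖x‖ := ih (fun S hS => h S (List.mem_cons_of_mem _ hS)) x

private lemma aux_star_prod_iso (l : List (H →L[ℂ] H)) (h : ∀ T ∈ l, ∀ x, ‖star T x‖ = ‖x‖) :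
    ∀ x, ‖star l.prod x‖ = ‖x‖ := by
  induction l with
  | nil => intro x; simp [one_apply]
  | cons T l ih =>
    intro x
    rw [List.prod_cons, star_mul, mul_apply_eq_comp]
    rw [ih (fun S hS => h S (List.mem_cons_of_mem _ hS)) _, h T List.mem_cons_self x]

private lemma aux_F_comm (V : H →L[ℂ] H) (hV : ∀ x, ‖V x‖ = ‖x‖) (a b : ℂ)
    (ha : ‖a‖ < 1) (hb : ‖b‖ < 1) : Commute (auxF V a) (auxF V b) := by
  set W := ContinuousLinearMap.adjoint V with hW
  have hWn : ‖W‖ ≤ 1 := aux_adj_norm_le V hV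
  have hua : IsUnit ((1 : H →L[ℂ] H) + (starRingEnd ℂ a) • W) :=
    aux_unit W hWn _ (by rwa [RCLike.norm_conj])
  have hub : IsUnit ((1 : H →L[ℂ] H) + (starRingEnd ℂ b) • W) :=
    aux_unit W hWn _ (by rwa [RCLike.norm_conj])
  have cXX : Commute (W + a • 1) (W + b • (1 : H →L[ℂ] H)) := by
    have h1 : Commute W (W + b • (1 : H →L[ℂ] H)) :=
      (Commute.refl W).add_right ((Commute.one_right W).smul_right b)
    have h2 : Commute (a • (1 : H →L[ℂ] H)) (W + b • (1 : H →L[ℂ] H)) :=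
      ((Commute.one_left W).add_right ((Commute.one_left _).smul_right b)).smul_left a
    exact h1.add_left h2
  have cXib : Commute (W + a • 1) (Ring.inverse ((1 : H →L[ℂ] H) + (starRingEnd ℂ b) • W)) :=
    aux_comm_inv _ _ (aux_comm_poly W a _) hub
  have cXia : Commute (W + b • 1) (Ring.inverse ((1 : H →L[ℂ] H) + (starRingEnd ℂ a) • W)) :=
    aux_comm_inv _ _ (aux_comm_poly W b _) hua
  have cii : Commute (Ring.inverse ((1 : H →L[ℂ] H) + (starRingEnd ℂ a) • W))
      (Ring.inverse ((1 : H →L[ℂ] H) + (starRingEnd ℂ b) • W)) :=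
    aux_comm_inv _ _ ((aux_comm_inv _ _ (aux_comm_poly2 W _ _) hua).symm) hub
  have h1 : Commute (W + a • 1) ((W + b • 1) * Ring.inverse ((1 : H →L[ℂ] H) + (starRingEnd ℂ b) • W)) :=
    cXX.mul_right cXib
  have h2 : Commute (Ring.inverse ((1 : H →L[ℂ] H) + (starRingEnd ℂ a) • W))
      ((W + b • 1) * Ring.inverse ((1 : H →L[ℂ] H) + (starRingEnd ℂ b) • W)) :=
    (cXia.symm).mul_right cii
  exact h1.mul_left h2

/-- The auxiliary sequence `u_n = ∑_{j≤n} (-ā)^j V^{n-j} f`. -/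
noncomputable def auxU (V : H →L[ℂ] H) (a : ℂ) (f : H) : ℕ → H
  | 0 => f
  | n + 1 => V (auxU V a f n) + (-(starRingEnd ℂ a)) ^ (n + 1) • f

private lemma aux_C1 (V : H →L[ℂ] H) (hV : ∀ x, ‖V x‖ = ‖x‖) (a : ℂ) (f : H)
    (hf : ContinuousLinearMap.adjoint V f = 0) (n : ℕ) :
    auxU V a f n - V (ContinuousLinearMap.adjoint V (auxU V a f n))
      = (-(starRingEnd ℂ a)) ^ n • f := by
  cases n with
  | zero => simp [auxU, hf]
  | succ n =>
    have hadj : ContinuousLinearMap.adjoint V (auxU V a f (n + 1)) = auxU V a f n := by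
      rw [auxU, map_add, map_smul, aux_WV V hV, hf, smul_zero, add_zero]
    rw [hadj, auxU]
    abel

private lemma aux_C2 (V : H →L[ℂ] H) (hV : ∀ x, ‖V x‖ = ‖x‖) (a : ℂ) (f : H)
    (hf : ContinuousLinearMap.adjoint V f = 0) (n : ℕ) :
    auxU V a f n + (starRingEnd ℂ a) • (ContinuousLinearMap.adjoint V (auxU V a f n))
      = (V ^ n) f := by
  induction n with
  | zero => simp [auxU, hf]
  | succ n ih =>
    have hadj : ContinuousLinearMap.adjoint V (auxU V a f (n + 1)) = auxU V a f n := by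
      rw [auxU, map_add, map_smul, aux_WV V hV, hf, smul_zero, add_zero]
    rw [hadj, pow_succ', mul_apply_eq_comp, ← ih]
    rw [auxU, map_add, map_smul]
    have hc1 := aux_C1 V hV a f hf n
    have : V (ContinuousLinearMap.adjoint V (auxU V a f n))
        = auxU V a f n - (-(starRingEnd ℂ a)) ^ n • f := by
      rw [← hc1]; abel
    rw [this, smul_sub, smul_smul]
    have hpow : (starRingEnd ℂ a) * (-(starRingEnd ℂ a)) ^ n
        = -((-(starRingEnd ℂ a)) ^ (n + 1)) := by ring
    rw [hpow]
    module

private lemma aux_F_strict (V : H →L[ℂ] H) (hV : ∀ x, ‖V x‖ = ‖x‖) (a : ℂ)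
    (ha : ‖a‖ < 1) (ha0 : a ≠ 0) (f : H) (hfker : ContinuousLinearMap.adjoint V f = 0)
    (hf1 : ‖f‖ = 1) (n : ℕ) : ‖auxF V a ((V ^ n) f)‖ < 1 := by
  have hWn : ‖ContinuousLinearMap.adjoint V‖ ≤ 1 := aux_adj_norm_le V hV
  have hu : IsUnit ((1 : H →L[ℂ] H) + (starRingEnd ℂ a) • ContinuousLinearMap.adjoint V) :=
    aux_unit _ hWn _ (by rwa [RCLike.norm_conj])
  set u := auxU V a f n with hu_def
  have hC2 : u + (starRingEnd ℂ a) • (ContinuousLinearMap.adjoint V u) = (V ^ n) f :=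
    aux_C2 V hV a f hfker n
  have hC1 : u - V (ContinuousLinearMap.adjoint V u) = (-(starRingEnd ℂ a)) ^ n • f :=
    aux_C1 V hV a f hfker n
  have hinv : Ring.inverse ((1 : H →L[ℂ] H) + (starRingEnd ℂ a) • ContinuousLinearMap.adjoint V)
      ((V ^ n) f) = u := by
    have h : ((1 : H →L[ℂ] H) + (starRingEnd ℂ a) • ContinuousLinearMap.adjoint V) u
        = (V ^ n) f := by
      rw [add_apply, smul_apply, one_apply_eq_self]; exact hC2
    rw [← h, ← mul_apply_eq_comp, Ring.inverse_mul_cancel _ hu, one_apply_eq_self]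
  have happ : auxF V a ((V ^ n) f) = ContinuousLinearMap.adjoint V u + a • u := by
    rw [auxF, mul_apply_eq_comp, hinv, add_apply, smul_apply, one_apply_eq_self]
  have hkey := aux_key_sq V hV a u
  rw [hC2, hC1] at hkey
  have hVnf : ‖(V ^ n) f‖ = 1 := by
    clear hkey happ hinv hC1 hC2 hu_def
    induction n with
    | zero => simpa using hf1
    | succ m ihm => rw [pow_succ', mul_apply_eq_comp, hV]; exact ihm
  have hna : ‖(-(starRingEnd ℂ a)) ^ n • f‖ = ‖a‖ ^ n := by
    rw [norm_smul, norm_pow, norm_neg, RCLike.norm_conj, hf1, mul_one]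
  rw [hVnf, hna] at hkey
  have hapos : 0 < ‖a‖ := norm_pos_iff.2 ha0
  have hrpos : 0 < (1 - ‖a‖ ^ 2) * (‖a‖ ^ n) ^ 2 := by
    apply mul_pos
    · nlinarith
    · positivity
  rw [happ]
  nlinarith [norm_nonneg (ContinuousLinearMap.adjoint V u + a • u)]

private lemma aux_B_star_iso (V : H →L[ℂ] H) (hV : ∀ x, ‖V x‖ = ‖x‖) {d : ℕ}
    (lam : Fin d → ℂ) (hlam : ∀ j, ‖lam j‖ < 1) (g : H) :
    ‖star (blaschkeOp V lam) g‖ = ‖g‖ := by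
  have hB : blaschkeOp V lam = (List.ofFn fun j => auxF V (lam j)).prod := rfl
  rw [hB]
  refine aux_star_prod_iso _ ?_ g
  intro T hT
  obtain ⟨j, rfl⟩ := List.mem_ofFn.1 hT
  exact aux_starF_iso V hV (lam j) (hlam j)

private lemma aux_B_strict (V : H →L[ℂ] H) (hV : ∀ x, ‖V x‖ = ‖x‖) {d : ℕ}
    (lam : Fin d → ℂ) (hlam : ∀ j, ‖lam j‖ < 1) (j0 : Fin d) (hj0 : lam j0 ≠ 0)
    (f : H) (hfker : ContinuousLinearMap.adjoint V f = 0) (hf1 : ‖f‖ = 1) (n : ℕ) :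
    ‖blaschkeOp V lam ((V ^ n) f)‖ < 1 := by
  classical
  set F : Fin d → (H →L[ℂ] H) := fun j => auxF V (lam j) with hF
  have hB : blaschkeOp V lam = (List.ofFn F).prod := rfl
  have hmem : F j0 ∈ List.ofFn F := List.mem_ofFn.2 ⟨j0, rfl⟩
  have hpair : (List.ofFn F).Pairwise Commute := by
    rw [List.pairwise_ofFn]
    intro i j _
    exact aux_F_comm V hV (lam i) (lam j) (hlam i) (hlam j)
  have hperm : List.Perm (List.ofFn F) (F j0 :: (List.ofFn F).erase (F j0)) :=
    List.perm_cons_erase hmem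
  have hprod : (List.ofFn F).prod = F j0 * ((List.ofFn F).erase (F j0)).prod :=
    (hperm.prod_eq' hpair).trans (List.prod_cons)
  have hcomm : Commute (F j0) (((List.ofFn F).erase (F j0)).prod) := by
    apply Commute.list_prod_right
    intro x hx
    obtain ⟨j, rfl⟩ := List.mem_ofFn.1 (List.mem_of_mem_erase hx)
    exact aux_F_comm V hV (lam j0) (lam j) (hlam j0) (hlam j)
  rw [hB, hprod, hcomm.eq, mul_apply_eq_comp]
  calc ‖((List.ofFn F).erase (F j0)).prod (F j0 ((V ^ n) f))‖
      ≤ ‖F j0 ((V ^ n) f)‖ := by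
        apply aux_prod_contract
        intro T hT
        obtain ⟨j, rfl⟩ := List.mem_ofFn.1 (List.mem_of_mem_erase hT)
        exact aux_F_contract V hV (lam j) (hlam j)
    _ < 1 := aux_F_strict V hV (lam j0) (hlam j0) hj0 f hfker hf1 n

private lemma aux_parseval (e : HilbertBasis ℕ ℂ H) (y : H) :
    HasSum (fun m => ‖⟪y, e m⟫‖ ^ 2) (‖y‖ ^ 2) := by
  have h := e.hasSum_inner_mul_inner y y
  have h2 := h.mapL Complex.reCLM
  have he : ∀ m : ℕ, Complex.reCLM (⟪y, e m⟫ * ⟪e m, y⟫) = ‖⟪y, e m⟫‖ ^ 2 := by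
    intro m
    have : ⟪e m, y⟫ = starRingEnd ℂ ⟪y, e m⟫ := (inner_conj_symm _ _).symm
    rw [this, Complex.mul_conj]
    simp only [Complex.normSq_eq_norm_sq, Complex.ofReal_pow]
    norm_cast
  have hy : Complex.reCLM (⟪y, y⟫ : ℂ) = ‖y‖ ^ 2 := by
    rw [inner_self_eq_norm_sq_to_K]
    norm_cast
  rw [funext he, hy] at h2
  exact h2

end Aux19

theorem stmt19 {H : Type*} [NormedAddCommGroup H] [InnerProductSpace ℂ H] [CompleteSpace H]
    (e : HilbertBasis ℕ ℂ H) (V : H →L[ℂ] H) (hV : ∀ x, ‖V x‖ = ‖x‖) (d : ℕ)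
    (lam : Fin d → ℂ) (hlam : ∀ j, ‖lam j‖ < 1) (hroot : ∃ j, lam j ≠ 0)
    (hwold : ∀ m : ℕ, ∃ (s : ℕ) (f : H), 0 < s ∧
      f ∈ LinearMap.ker ((ContinuousLinearMap.adjoint V : H →L[ℂ] H) : H →ₗ[ℂ] H) ∧ ‖f‖ = 1 ∧ e m = (V ^ (s - 1)) f) :
    ∀ k : ℕ, ∃ A B : ℝ, 0 < A ∧ 0 < B ∧ ∀ g : H,
      A * ‖g‖ ^ 2 ≤
          ∑' m : {m : ℕ // m ≠ k}, ‖(inner ℂ g (blaschkeOp V lam (e m)) : ℂ)‖ ^ 2 ∧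
        ∑' m : {m : ℕ // m ≠ k}, ‖(inner ℂ g (blaschkeOp V lam (e m)) : ℂ)‖ ^ 2 ≤
          B * ‖g‖ ^ 2 := by
  intro k
  obtain ⟨j0, hj0⟩ := hroot
  obtain ⟨s, f, hs, hker, hf1, hek⟩ := hwold k
  have hfker : ContinuousLinearMap.adjoint V f = 0 := hker
  set ρ := ‖blaschkeOp V lam (e k)‖ with hρ_def
  have hρ : ρ < 1 := by
    rw [hρ_def, hek]
    exact aux_B_strict V hV lam hlam j0 hj0 f hfker hf1 (s - 1)
  have hρ0 : 0 ≤ ρ := norm_nonneg _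
  refine ⟨1 - ρ ^ 2, 1, by nlinarith, one_pos, ?_⟩
  intro g
  set B := blaschkeOp V lam with hB_def
  set g' := star B g with hg'_def
  have hg' : ‖g'‖ = ‖g‖ := aux_B_star_iso V hV lam hlam g
  have hinner : ∀ m : ℕ, (inner ℂ g (B (e m)) : ℂ) = inner ℂ g' (e m) := by
    intro m
    rw [hg'_def, ContinuousLinearMap.star_eq_adjoint]
    exact (ContinuousLinearMap.adjoint_inner_left B (e m) g).symm
  have hsum : HasSum (fun m : ℕ => ‖(inner ℂ g (B (e m)) : ℂ)‖ ^ 2) (‖g‖ ^ 2) := by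
    have := aux_parseval e g'
    rw [← hg']
    convert this using 2 with m
    rw [hinner m]
  have hsummable : Summable (fun m : ℕ => ‖(inner ℂ g (B (e m)) : ℂ)‖ ^ 2) := hsum.summable
  -- split off the k-th term
  have hsplit :
      (∑' m : ({k} : Set ℕ), ‖(inner ℂ g (B (e (m : ℕ))) : ℂ)‖ ^ 2)
        + ∑' m : ↑({k}ᶜ : Set ℕ), ‖(inner ℂ g (B (e (m : ℕ))) : ℂ)‖ ^ 2
      = ∑' m : ℕ, ‖(inner ℂ g (B (e m)) : ℂ)‖ ^ 2 :=
    Summable.tsum_add_tsum_compl (hsummable.subtype _) (hsummable.subtype _)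
  have hsingle : (∑' m : ({k} : Set ℕ), ‖(inner ℂ g (B (e (m : ℕ))) : ℂ)‖ ^ 2)
      = ‖(inner ℂ g (B (e k)) : ℂ)‖ ^ 2 :=
    tsum_singleton k (fun m : ℕ => ‖(inner ℂ g (B (e m)) : ℂ)‖ ^ 2)
  have htot : (∑' m : ℕ, ‖(inner ℂ g (B (e m)) : ℂ)‖ ^ 2) = ‖g‖ ^ 2 := hsum.tsum_eq
  have hco : (∑' m : {m : ℕ // m ≠ k}, ‖(inner ℂ g (B (e (m : ℕ))) : ℂ)‖ ^ 2)
      = ∑' m : ↑({k}ᶜ : Set ℕ), ‖(inner ℂ g (B (e (m : ℕ))) : ℂ)‖ ^ 2 := rfl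
  have hkey : (∑' m : {m : ℕ // m ≠ k}, ‖(inner ℂ g (B (e (m : ℕ))) : ℂ)‖ ^ 2)
      = ‖g‖ ^ 2 - ‖(inner ℂ g (B (e k)) : ℂ)‖ ^ 2 := by
    rw [hco]
    rw [hsingle] at hsplit
    linarith [hsplit, htot]
  have hcs : ‖(inner ℂ g (B (e k)) : ℂ)‖ ≤ ‖g‖ * ρ := by
    rw [hρ_def]
    exact norm_inner_le_norm g _
  have hnn : 0 ≤ ‖(inner ℂ g (B (e k)) : ℂ)‖ := norm_nonneg _
  constructor
  · rw [hkey]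
    nlinarith [norm_nonneg g]
  · rw [hkey]
    nlinarith [norm_nonneg g]
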